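/- If p is in the Carathéodory class P with Taylor expansion p(z) = 1 + Σ_{n≥1} p_n z^n and λ is a real number, then |p_2 − λ p_1²| ≤ 2 − 4λ when λ ≤ 0; |p_2 − λ p_1²| ≤ 2 when 0 ≤ λ ≤ 1; and |p_2 − λ p_1²| ≤ 4λ − 2 when λ ≥ 1. Moreover, for 0 < λ ≤ 1/2 one has the refinement |p_2 − λ p_1²| + λ|p_1|² ≤ 2, and for 1/2 < λ ≤ 1 one has |p_2 − λ p_1²| + (1 − λ)|p_1|² ≤ 2. -/

import Mathlib

open Metric

/-- `p` belongs to the Carathéodory class: `p` is analytic on the unit disk,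
`p 0 = 1`, and `Re (p z) > 0` on the unit disk. -/
def InCaratheodory (p : ℂ → ℂ) : Prop :=
  AnalyticOnNhd ℂ p (ball (0 : ℂ) 1) ∧ p 0 = 1 ∧
    ∀ z ∈ ball (0 : ℂ) 1, 0 < (p z).re

/-!
The Cayley transform `ω = (p - 1) / (p + 1)` maps the disc into itself and fixes `0`, so by the
Schwarz lemma `g = ω / z = dslope p 0 / (p + 1)` maps the disc into the closed disc.
The Schwarz–Pick bound `‖g' 0‖ ≤ 1 - ‖g 0‖²` at the origin, with `g 0 = p₁ / 2` and
`g' 0 = (2 p₂ - p₁²) / 4`, is the classical estimate `‖p₂ - p₁² / 2‖ ≤ 2 - ‖p₁‖² / 2`.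
All the bounds follow from it by writing `p₂ - λ p₁² = (p₂ - p₁² / 2) + (1 / 2 - λ) p₁²`
and using `‖p₁‖ ≤ 2`.
-/

open Set Filter Topology ComplexConjugate

theorem Complex.normSq_add_one_sub_normSq_sub_one (w : ℂ) :
    normSq (w + 1) - normSq (w - 1) = 4 * w.re := by
  simp only [normSq_apply, sub_re, sub_im, add_re, add_im, one_re, one_im]
  ring

theorem Complex.norm_sub_one_lt_norm_add_one {w : ℂ} (hw : 0 < w.re) : ‖w - 1‖ < ‖w + 1‖ := by
  have key := normSq_add_one_sub_normSq_sub_one w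
  simp only [normSq_eq_norm_sq] at key
  exact lt_of_pow_lt_pow_left₀ 2 (norm_nonneg _) (by linarith)

theorem Complex.normSq_one_sub_conj_mul_sub_normSq_sub (a w : ℂ) :
    normSq (1 - conj a * w) - normSq (w - a) = (1 - normSq a) * (1 - normSq w) := by
  simp only [normSq_apply, sub_re, sub_im, mul_re, mul_im, one_re, one_im, conj_re, conj_im]
  ring

theorem Complex.norm_sub_le_norm_one_sub_conj_mul {a w : ℂ} (ha : ‖a‖ ≤ 1) (hw : ‖w‖ ≤ 1) :
    ‖w - a‖ ≤ ‖1 - conj a * w‖ := by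
  have key := normSq_one_sub_conj_mul_sub_normSq_sub a w
  simp only [normSq_eq_norm_sq] at key
  have : 0 ≤ (1 - ‖a‖ ^ 2) * (1 - ‖w‖ ^ 2) :=
    mul_nonneg (by nlinarith [norm_nonneg a]) (by nlinarith [norm_nonneg w])
  exact le_of_sq_le_sq (by linarith) (norm_nonneg _)

section SchwarzPick

variable {g : ℂ → ℂ}

theorem Complex.deriv_eq_zero_of_norm_eq_one_of_mapsTo (hd : DifferentiableOn ℂ g (ball 0 1))
    (hmaps : MapsTo g (ball 0 1) (closedBall 0 1)) (h0 : ‖g 0‖ = 1) : deriv g 0 = 0 := by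
  have hball : ball (0 : ℂ) 1 ∈ 𝓝 0 := ball_mem_nhds 0 one_pos
  have hmax : IsLocalMax (norm ∘ g) 0 := by
    filter_upwards [hball] with z hz
    simpa [h0] using hmaps hz
  have hconst : g =ᶠ[𝓝 0] fun _ => g 0 := eventually_eq_of_isLocalMax_norm
    (eventually_of_mem hball fun z hz => hd.differentiableAt (isOpen_ball.mem_nhds hz)) hmax
  simpa using hconst.deriv_eq

theorem Complex.norm_deriv_le_one_sub_sq_of_norm_lt_one (hd : DifferentiableOn ℂ g (ball 0 1))
    (hmaps : MapsTo g (ball 0 1) (closedBall 0 1)) (h0 : ‖g 0‖ < 1) :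
    ‖deriv g 0‖ ≤ 1 - ‖g 0‖ ^ 2 := by
  set a := g 0 with ha
  set u : ℂ → ℂ := fun z => 1 - conj a * g z
  have hu : ∀ z ∈ ball (0 : ℂ) 1, u z ≠ 0 := by
    intro z hz hzero
    have : ‖conj a * g z‖ < 1 := by
      rw [norm_mul, RCLike.norm_conj]
      exact lt_of_le_of_lt (mul_le_of_le_one_right (norm_nonneg _) (by simpa using hmaps hz)) h0
    simp [sub_eq_zero.1 hzero |>.symm] at this
  have hu0 : u 0 = ((1 - ‖a‖ ^ 2 : ℝ) : ℂ) := by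
    simp only [u, ← ha, Complex.conj_mul']
    push_cast
    ring
  -- the disc automorphism `w ↦ (w - a) / (1 - conj a * w)` moves `g 0` to the origin
  set h : ℂ → ℂ := fun z => (g z - a) / u z
  have hhd : DifferentiableOn ℂ h (ball 0 1) :=
    (hd.sub_const a).div ((differentiableOn_const 1).sub ((differentiableOn_const _).mul hd)) hu
  have hhmaps : MapsTo h (ball 0 1) (closedBall (h 0) 1) := by
    intro z hz
    have hle : ‖g z - a‖ ≤ ‖u z‖ :=
      Complex.norm_sub_le_norm_one_sub_conj_mul h0.le (by simpa using hmaps hz)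
    simpa [h, ← ha, norm_div, div_le_one (norm_pos_iff.2 (hu z hz))] using hle
  have hderiv : deriv h 0 = deriv g 0 / u 0 := by
    have hg0 := (hd.differentiableAt (ball_mem_nhds 0 one_pos)).hasDerivAt
    have hu0 := hu 0 (mem_ball_self one_pos)
    have hh : HasDerivAt h ((deriv g 0 * u 0 - (g 0 - a) * -(conj a * deriv g 0)) / u 0 ^ 2) 0 :=
      (hg0.sub_const a).fun_div ((hg0.const_mul (conj a)).const_sub 1) hu0
    rw [hh.deriv, ← ha, sub_self, zero_mul, sub_zero, sq, mul_div_mul_right _ _ hu0]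
  have hle := norm_deriv_le_one_of_mapsTo_ball hhd hhmaps one_pos
  have hpos : 0 < 1 - ‖a‖ ^ 2 := by nlinarith [norm_nonneg a]
  rw [hderiv, norm_div, hu0, Complex.norm_real, Real.norm_of_nonneg hpos.le,
    div_le_one hpos] at hle
  exact hle

theorem Complex.norm_deriv_le_one_sub_sq_of_mapsTo (hd : DifferentiableOn ℂ g (ball 0 1))
    (hmaps : MapsTo g (ball 0 1) (closedBall 0 1)) : ‖deriv g 0‖ ≤ 1 - ‖g 0‖ ^ 2 := by
  rcases (show ‖g 0‖ ≤ 1 by simpa using hmaps (mem_ball_self one_pos)).lt_or_eq with h0 | h0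
  · exact norm_deriv_le_one_sub_sq_of_norm_lt_one hd hmaps h0
  · simp [deriv_eq_zero_of_norm_eq_one_of_mapsTo hd hmaps h0, h0]

end SchwarzPick

theorem dslope_sub_smul_of_continuousAt {𝕜 E : Type*} [NontriviallyNormedField 𝕜]
    [NormedAddCommGroup E] [NormedSpace 𝕜 E] {f : 𝕜 → E} {a : 𝕜} (hf : ContinuousAt f a) :
    dslope (fun x => (x - a) • f x) a = f := by
  funext x
  rcases eq_or_ne x a with rfl | hx
  · rw [dslope_same]
    refine (hasDerivAt_iff_tendsto_slope.2 ?_).deriv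
    refine (hf.tendsto.mono_left nhdsWithin_le_nhds).congr' ?_
    filter_upwards [self_mem_nhdsWithin] with y hy
    exact (slope_sub_smul f (Ne.symm hy)).symm
  · exact dslope_sub_smul_of_ne f hx

theorem hasFPowerSeriesOnBall_ofScalars_of_hasSum {f : ℂ → ℂ} {c : ℕ → ℂ} {r : NNReal}
    (hr : 0 < r) (hf : ∀ z ∈ ball (0 : ℂ) r, HasSum (fun n => c n * z ^ n) (f z)) :
    HasFPowerSeriesOnBall f (.ofScalars ℂ c) 0 r where
  r_le := by
    refine le_of_forall_lt_imp_le_of_dense fun r' hr' => ?_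
    lift r' to NNReal using hr'.ne_top
    refine FormalMultilinearSeries.le_radius_of_tendsto _ (l := 0) ?_
    have hz : ((r' : ℝ) : ℂ) ∈ ball (0 : ℂ) r := by
      simpa [abs_of_nonneg r'.2] using hr'
    simpa using (hf _ hz).summable.tendsto_atTop_zero.norm
  r_pos := by simpa using hr
  hasSum {y} hy := by
    simpa [FormalMultilinearSeries.ofScalars_apply_eq, mul_comm] using hf y (by simpa using hy)

namespace InCaratheodory

variable {p : ℂ → ℂ} (hp : InCaratheodory p)
include hp

theorem add_one_ne_zero {z : ℂ} (hz : z ∈ ball (0 : ℂ) 1) : p z + 1 ≠ 0 := fun h => by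
  simpa [h] using (Complex.norm_sub_one_lt_norm_add_one (hp.2.2 z hz)).trans_le' (norm_nonneg _)

theorem differentiableOn_dslope : DifferentiableOn ℂ (dslope p 0) (ball 0 1) :=
  (Complex.differentiableOn_dslope (ball_mem_nhds 0 one_pos)).2 hp.1.differentiableOn

theorem differentiableOn_dslope_div_add_one :
    DifferentiableOn ℂ (fun z => dslope p 0 z / (p z + 1)) (ball 0 1) :=
  hp.differentiableOn_dslope.div (hp.1.differentiableOn.add_const 1) fun _ => hp.add_one_ne_zero

theorem mapsTo_dslope_div_add_one :
    MapsTo (fun z => dslope p 0 z / (p z + 1)) (ball 0 1) (closedBall 0 1) := by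
  set g := fun z => dslope p 0 z / (p z + 1)
  set ω := fun z : ℂ => (z - 0) • g z
  have hω : ∀ z, ω z = (p z - 1) / (p z + 1) := fun z => by
    have := sub_smul_dslope p 0 z
    rw [smul_eq_mul, hp.2.1] at this
    rw [← this, mul_div_assoc]
    rfl
  have hgd := hp.differentiableOn_dslope_div_add_one
  have hωd : DifferentiableOn ℂ ω (ball 0 1) := (differentiableOn_id.sub_const 0).smul hgd
  have hωmaps : MapsTo ω (ball 0 1) (closedBall (ω 0) 1) := by
    intro z hz
    have h := Complex.norm_sub_one_lt_norm_add_one (hp.2.2 z hz)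
    rw [mem_closedBall, dist_eq_norm, hω, hω, hp.2.1, sub_self, zero_div, sub_zero, norm_div,
      div_le_one ((norm_nonneg _).trans_lt h)]
    exact h.le
  intro z hz
  have := Complex.norm_dslope_le_div_of_mapsTo_ball hωd hωmaps hz
  rw [dslope_sub_smul_of_continuousAt (hgd.continuousOn.continuousAt (ball_mem_nhds 0 one_pos)),
    div_one] at this
  simpa [g] using this

theorem norm_deriv_dslope_sub_sq_le :
    ‖deriv (dslope p 0) 0 - deriv p 0 ^ 2 / 2‖ ≤ 2 - ‖deriv p 0‖ ^ 2 / 2 := by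
  have hpick := Complex.norm_deriv_le_one_sub_sq_of_mapsTo
    hp.differentiableOn_dslope_div_add_one hp.mapsTo_dslope_div_add_one
  have hp0 : HasDerivAt p (deriv p 0) 0 :=
    (hp.1 0 (mem_ball_self one_pos)).differentiableAt.hasDerivAt
  have hq0 : HasDerivAt (dslope p 0) (deriv (dslope p 0) 0) 0 :=
    (hp.differentiableOn_dslope.differentiableAt (ball_mem_nhds 0 one_pos)).hasDerivAt
  have hderiv := (hq0.fun_div (hp0.add_const 1) (hp.add_one_ne_zero (mem_ball_self one_pos))).deriv
  set a := deriv p 0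
  set b := deriv (dslope p 0) 0
  rw [hderiv, dslope_same, hp.2.1, one_add_one_eq_two,
    show (b * 2 - a * a) / 2 ^ 2 = (b - a ^ 2 / 2) / 2 by ring, norm_div, norm_div,
    Complex.norm_two] at hpick
  linarith

end InCaratheodory

section FeketeSzego

variable {x y : ℂ} (h : ‖y - x ^ 2 / 2‖ ≤ 2 - ‖x‖ ^ 2 / 2)
include h

theorem norm_sub_ofReal_mul_sq_le (l : ℝ) :
    ‖y - l * x ^ 2‖ ≤ 2 - ‖x‖ ^ 2 / 2 + |1 / 2 - l| * ‖x‖ ^ 2 := by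
  have hsplit : y - l * x ^ 2 = (y - x ^ 2 / 2) + ((1 / 2 - l : ℝ) : ℂ) * x ^ 2 := by
    push_cast; ring
  calc ‖y - l * x ^ 2‖ ≤ ‖y - x ^ 2 / 2‖ + ‖((1 / 2 - l : ℝ) : ℂ) * x ^ 2‖ :=
        hsplit ▸ norm_add_le _ _
    _ ≤ _ := by rw [norm_mul, norm_pow, Complex.norm_real, Real.norm_eq_abs]; linarith

theorem norm_sub_ofReal_mul_sq_add_mul_le_two_of_le_half {l : ℝ} (hl : l ≤ 1 / 2) :
    ‖y - l * x ^ 2‖ + l * ‖x‖ ^ 2 ≤ 2 := by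
  have := norm_sub_ofReal_mul_sq_le h l
  rw [abs_of_nonneg (by linarith)] at this
  linarith

theorem norm_sub_ofReal_mul_sq_add_mul_le_two_of_half_le {l : ℝ} (hl : 1 / 2 ≤ l) :
    ‖y - l * x ^ 2‖ + (1 - l) * ‖x‖ ^ 2 ≤ 2 := by
  have := norm_sub_ofReal_mul_sq_le h l
  rw [abs_of_nonpos (by linarith)] at this
  linarith

theorem fekete_szego_of_norm_sub_sq_div_two_le (l : ℝ) :
    (l ≤ 0 → ‖y - (l : ℂ) * x ^ 2‖ ≤ 2 - 4 * l) ∧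
    (0 ≤ l ∧ l ≤ 1 → ‖y - (l : ℂ) * x ^ 2‖ ≤ 2) ∧
    (1 ≤ l → ‖y - (l : ℂ) * x ^ 2‖ ≤ 4 * l - 2) ∧
    (0 < l ∧ l ≤ 1 / 2 → ‖y - (l : ℂ) * x ^ 2‖ + l * ‖x‖ ^ 2 ≤ 2) ∧
    (1 / 2 < l ∧ l ≤ 1 → ‖y - (l : ℂ) * x ^ 2‖ + (1 - l) * ‖x‖ ^ 2 ≤ 2) := by
  have hx : ‖x‖ ^ 2 ≤ 4 := by linarith [(norm_nonneg _).trans h]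
  have hx0 : 0 ≤ ‖x‖ ^ 2 := by positivity
  have low := fun hl => norm_sub_ofReal_mul_sq_add_mul_le_two_of_le_half h (l := l) hl
  have high := fun hl => norm_sub_ofReal_mul_sq_add_mul_le_two_of_half_le h (l := l) hl
  refine ⟨fun hl => ?_, fun hl => ?_, fun hl => ?_, fun hl => low hl.2, fun hl => high hl.1.le⟩
  · nlinarith [low (by linarith)]
  · rcases le_total l (1 / 2) with hl' | hl'
    · nlinarith [low hl']
    · nlinarith [high hl']
  · nlinarith [high (by linarith)]

end FeketeSzego

theorem cara_fekete_szego_general (p : ℂ → ℂ) (c : ℕ → ℂ) (hp : InCaratheodory p)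
    (hrep : ∀ z ∈ ball (0 : ℂ) 1, HasSum (fun n : ℕ => c n * z ^ n) (p z))
    (l : ℝ) :
    (l ≤ 0 → ‖c 2 - (l : ℂ) * c 1 ^ 2‖ ≤ 2 - 4 * l) ∧
    (0 ≤ l ∧ l ≤ 1 → ‖c 2 - (l : ℂ) * c 1 ^ 2‖ ≤ 2) ∧
    (1 ≤ l → ‖c 2 - (l : ℂ) * c 1 ^ 2‖ ≤ 4 * l - 2) ∧
    (0 < l ∧ l ≤ 1 / 2 →
      ‖c 2 - (l : ℂ) * c 1 ^ 2‖ + l * ‖c 1‖ ^ 2 ≤ 2) ∧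
    (1 / 2 < l ∧ l ≤ 1 →
      ‖c 2 - (l : ℂ) * c 1 ^ 2‖ + (1 - l) * ‖c 1‖ ^ 2 ≤ 2) := by
  have hseries : HasFPowerSeriesAt p (.ofScalars ℂ c) 0 :=
    (hasFPowerSeriesOnBall_ofScalars_of_hasSum one_pos (by simpa using hrep)).hasFPowerSeriesAt
  have hc1 : deriv p 0 = c 1 := hseries.deriv.trans FormalMultilinearSeries.coeff_ofScalars
  have hc2 : deriv (dslope p 0) 0 = c 2 :=
    hseries.has_fpower_series_dslope_fslope.deriv.trans
      (FormalMultilinearSeries.coeff_fslope.trans FormalMultilinearSeries.coeff_ofScalars)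
  have hbound := hp.norm_deriv_dslope_sub_sq_le
  rw [hc1, hc2] at hbound
  exact fekete_szego_of_norm_sub_sq_div_two_le hbound l

theorem cara_fekete_szego (p : ℂ → ℂ) (c : ℕ → ℂ) (hp : InCaratheodory p)
    (hc0 : c 0 = 1)
    (hrep : ∀ z ∈ ball (0 : ℂ) 1, HasSum (fun n : ℕ => c n * z ^ n) (p z))
    (l : ℝ) :
    (l ≤ 0 → ‖c 2 - (l : ℂ) * c 1 ^ 2‖ ≤ 2 - 4 * l) ∧
    (0 ≤ l ∧ l ≤ 1 → ‖c 2 - (l : ℂ) * c 1 ^ 2‖ ≤ 2) ∧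
    (1 ≤ l → ‖c 2 - (l : ℂ) * c 1 ^ 2‖ ≤ 4 * l - 2) ∧
    (0 < l ∧ l ≤ 1 / 2 →
      ‖c 2 - (l : ℂ) * c 1 ^ 2‖ + l * ‖c 1‖ ^ 2 ≤ 2) ∧
    (1 / 2 < l ∧ l ≤ 1 →
      ‖c 2 - (l : ℂ) * c 1 ^ 2‖ + (1 - l) * ‖c 1‖ ^ 2 ≤ 2) :=
  cara_fekete_szego_general p c hp hrep l
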